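/- For all u > 0 and v ∈ ℝ, the vector ν(u,v) = (2uⁿcos(nv), 2uⁿsin(nv), u^{2n} − 1)/(1 + u^{2n}) is a unit normal to the dihedral Enneper parametrization of order n: ‖ν(u,v)‖ = 1, ν(u,v)·σⁿ_u(u,v) = 0, and ν(u,v)·σⁿ_v(u,v) = 0. -/

import Mathlib

noncomputable section
open MeasureTheory Real

/-- Dot product on `ℝ³ = ℝ × ℝ × ℝ`. -/
def dot3 (a b : ℝ × ℝ × ℝ) : ℝ := a.1 * b.1 + a.2.1 * b.2.1 + a.2.2 * b.2.2

/-- Euclidean norm on `ℝ³ = ℝ × ℝ × ℝ`. -/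
def norm3 (a : ℝ × ℝ × ℝ) : ℝ := Real.sqrt (dot3 a a)

/-- Partial derivative in the first (`u`) variable. -/
def pdU {E : Type*} [NormedAddCommGroup E] [NormedSpace ℝ E] (f : ℝ × ℝ → E) (p : ℝ × ℝ) : E :=
  deriv (fun x => f (x, p.2)) p.1

/-- Partial derivative in the second (`v`) variable. -/
def pdV {E : Type*} [NormedAddCommGroup E] [NormedSpace ℝ E] (f : ℝ × ℝ → E) (p : ℝ × ℝ) : E :=
  deriv (fun y => f (p.1, y)) p.2

/-- The dihedral Enneper parametrization `σⁿ` of order `n`. -/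
def enneper (n : ℕ) (p : ℝ × ℝ) : ℝ × ℝ × ℝ :=
  (p.1 * ((2 * (n : ℝ) + 1) * Real.cos p.2 - p.1 ^ (2 * n) * Real.cos ((2 * (n : ℝ) + 1) * p.2))
      / (4 * (n : ℝ) + 2),
   -(p.1 * ((2 * (n : ℝ) + 1) * Real.sin p.2 + p.1 ^ (2 * n) * Real.sin ((2 * (n : ℝ) + 1) * p.2)))
      / (4 * (n : ℝ) + 2),
   p.1 ^ (n + 1) * Real.cos (((n : ℝ) + 1) * p.2) / ((n : ℝ) + 1))

/-- The unit normal `ν` of the dihedral Enneper parametrization of order `n`. -/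
def enneperNormal (n : ℕ) (p : ℝ × ℝ) : ℝ × ℝ × ℝ :=
  (1 + p.1 ^ (2 * n))⁻¹ •
    (2 * p.1 ^ n * Real.cos ((n : ℝ) * p.2),
     2 * p.1 ^ n * Real.sin ((n : ℝ) * p.2),
     p.1 ^ (2 * n) - 1)

/-! With `t = uⁿ` the normal is `(2t·cos nv, 2t·sin nv, t² − 1)/(1 + t²)`, whose numerator has
length `1 + t²`. The partial derivatives of `σⁿ` are explicit; after writing `(n+1)v = nv + v` and
`(2n+1)v = 2·nv + v`, both inner products with the normal collapse to multiples of
`cos² nv + sin² nv − 1`. -/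

lemma dot3_smul_left (c : ℝ) (a b : ℝ × ℝ × ℝ) : dot3 (c • a) b = c * dot3 a b := by
  simp only [dot3, Prod.smul_fst, Prod.smul_snd, smul_eq_mul]
  ring

lemma hasDerivAt_enneper_fst (n : ℕ) (u v : ℝ) :
    HasDerivAt (fun x => enneper n (x, v))
      ((cos v - u ^ (2 * n) * cos ((2 * n + 1) * v)) / 2,
       -(sin v + u ^ (2 * n) * sin ((2 * n + 1) * v)) / 2,
       u ^ n * cos ((n + 1) * v)) u := by
  -- differentiating `x ^ (2 * n + 1)` rather than `x * x ^ (2 * n)` avoids the truncated `2 * n - 1`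
  have h₁ := (((hasDerivAt_id u).const_mul ((2 * n + 1) * cos v)).sub
    ((hasDerivAt_pow (2 * n + 1) u).const_mul (cos ((2 * n + 1) * v)))).div_const (4 * n + 2)
  have h₂ := (((hasDerivAt_id u).const_mul ((2 * n + 1) * sin v)).add
    ((hasDerivAt_pow (2 * n + 1) u).const_mul (sin ((2 * n + 1) * v)))).neg.div_const (4 * n + 2)
  have h₃ := ((hasDerivAt_pow (n + 1) u).const_mul (cos ((n + 1) * v))).div_const (n + 1)
  convert h₁.prodMk (h₂.prodMk h₃) using 1
  · funext x
    refine Prod.ext ?_ (Prod.ext ?_ ?_) <;>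
      simp only [enneper, Pi.sub_apply, Pi.add_apply, Pi.neg_apply, id_eq] <;> ring
  · refine Prod.ext ?_ (Prod.ext ?_ ?_) <;> push_cast [Nat.add_sub_cancel] <;> field_simp <;> ring

lemma hasDerivAt_enneper_snd (n : ℕ) (u v : ℝ) :
    HasDerivAt (fun y => enneper n (u, y))
      ((-(u * sin v) + u ^ (2 * n + 1) * sin ((2 * n + 1) * v)) / 2,
       -(u * cos v + u ^ (2 * n + 1) * cos ((2 * n + 1) * v)) / 2,
       -(u ^ (n + 1) * sin ((n + 1) * v))) v := by
  have h₁ := ((((hasDerivAt_cos v).const_mul ((2 * n + 1) * u)).sub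
    (((hasDerivAt_id v).const_mul (2 * (n : ℝ) + 1)).cos.const_mul (u ^ (2 * n + 1))))).div_const
      (4 * n + 2)
  have h₂ := ((((hasDerivAt_sin v).const_mul ((2 * n + 1) * u)).add
    (((hasDerivAt_id v).const_mul (2 * (n : ℝ) + 1)).sin.const_mul (u ^ (2 * n + 1))))).neg.div_const
      (4 * n + 2)
  have h₃ := (((hasDerivAt_id v).const_mul ((n : ℝ) + 1)).cos.const_mul (u ^ (n + 1))).div_const
    (n + 1)
  convert h₁.prodMk (h₂.prodMk h₃) using 1
  · funext y
    refine Prod.ext ?_ (Prod.ext ?_ ?_) <;>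
      simp only [enneper, Pi.sub_apply, Pi.add_apply, Pi.neg_apply, id_eq] <;> ring
  · refine Prod.ext ?_ (Prod.ext ?_ ?_) <;> simp only [id_eq] <;> field_simp <;> ring

lemma enneperNormal_eq (n : ℕ) (u v : ℝ) :
    enneperNormal n (u, v) =
      (1 + (u ^ n) ^ 2)⁻¹ • (2 * u ^ n * cos (n * v), 2 * u ^ n * sin (n * v), (u ^ n) ^ 2 - 1) := by
  rw [enneperNormal, pow_mul']

lemma norm3_enneperNormal (n : ℕ) (p : ℝ × ℝ) : norm3 (enneperNormal n p) = 1 := by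
  have hpos : 0 < 1 + (p.1 ^ n) ^ 2 := by positivity
  rw [norm3, Real.sqrt_eq_one, enneperNormal_eq]
  simp only [dot3, Prod.smul_fst, Prod.smul_snd, smul_eq_mul]
  field_simp
  linear_combination 4 * (p.1 ^ n) ^ 2 * sin_sq_add_cos_sq (n * p.2)

lemma dot3_enneperNormal_tangent_fst (t α v : ℝ) :
    dot3 (2 * t * cos α, 2 * t * sin α, t ^ 2 - 1)
      ((cos v - t ^ 2 * cos (2 * α + v)) / 2, -(sin v + t ^ 2 * sin (2 * α + v)) / 2,
        t * cos (α + v)) = 0 := by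
  rw [show 2 * α + v = α + (α + v) by ring]
  simp only [dot3, cos_add, sin_add]
  linear_combination -t ^ 3 * (cos α * cos v - sin α * sin v) * sin_sq_add_cos_sq α

lemma dot3_enneperNormal_tangent_snd (t u α v : ℝ) :
    dot3 (2 * t * cos α, 2 * t * sin α, t ^ 2 - 1)
      ((-(u * sin v) + u * t ^ 2 * sin (2 * α + v)) / 2,
        -(u * cos v + u * t ^ 2 * cos (2 * α + v)) / 2, -(u * t * sin (α + v))) = 0 := by
  rw [show 2 * α + v = α + (α + v) by ring]
  simp only [dot3, cos_add, sin_add]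
  linear_combination u * t ^ 3 * (sin α * cos v + cos α * sin v) * sin_sq_add_cos_sq α

theorem enneper_unitNormal_general (n : ℕ) :
    ∀ p : ℝ × ℝ, 0 < p.1 →
      norm3 (enneperNormal n p) = 1 ∧
      dot3 (enneperNormal n p) (pdU (enneper n) p) = 0 ∧
      dot3 (enneperNormal n p) (pdV (enneper n) p) = 0 := by
  rintro ⟨u, v⟩ -
  have hangle₁ : (2 * (n : ℝ) + 1) * v = 2 * (n * v) + v := by ring
  have hangle₂ : ((n : ℝ) + 1) * v = n * v + v := by ring
  have hpow₁ : u ^ (2 * n + 1) = u * (u ^ n) ^ 2 := by ring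
  have hpow₂ : u ^ (n + 1) = u * u ^ n := by ring
  refine ⟨norm3_enneperNormal n _, ?_, ?_⟩
  · rw [pdU, (hasDerivAt_enneper_fst n u v).deriv, enneperNormal_eq, dot3_smul_left, hangle₁,
      hangle₂, pow_mul', dot3_enneperNormal_tangent_fst, mul_zero]
  · rw [pdV, (hasDerivAt_enneper_snd n u v).deriv, enneperNormal_eq, dot3_smul_left, hangle₁,
      hangle₂, hpow₁, hpow₂, dot3_enneperNormal_tangent_snd, mul_zero]

/-- `ν(u,v) = (2uⁿcos(nv), 2uⁿsin(nv), u^{2n} − 1)/(1 + u^{2n})` is a unit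
normal to the dihedral Enneper parametrization of order `n ≥ 1`, for all `u > 0`, `v ∈ ℝ`. -/
theorem enneper_unitNormal (n : ℕ) (hn : 1 ≤ n) :
    ∀ p : ℝ × ℝ, 0 < p.1 →
      norm3 (enneperNormal n p) = 1 ∧
      dot3 (enneperNormal n p) (pdU (enneper n) p) = 0 ∧
      dot3 (enneperNormal n p) (pdV (enneper n) p) = 0 :=
  enneper_unitNormal_general n
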